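/- arXiv:1903.00775 — 2 statements merged into one kernel-verified Lean document; each statement's English description precedes it below -/
import Mathlib

section
/- (Proposition 1) Let A ⊆ ℝⁿ be a bounded closed set with 0 ∈ A ⊆ B₁ and Ω := ℝⁿ \ A. Let u be continuous on the closure of Ω and infinity harmonic in Ω with limsup_{x→∞} |u(x)|/|x| < +∞. Then lim_{r→∞} Lip(u, B_r^c) = S_∞, where B_r^c := ℝⁿ \ B_r. -/
open Metric Set Filter Bornology Topology
open scoped RealInnerProductSpace

noncomputable section

/-- Euclidean space ℝⁿ. -/
abbrev Euc (n : ℕ) := EuclideanSpace ℝ (Fin n)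

/-- Comparison with cones from above (infinity subharmonic). -/
def CmpAbove {n : ℕ} (Ω : Set (Euc n)) (u : Euc n → ℝ) : Prop :=
  ∀ V : Set (Euc n), IsOpen V → IsBounded V → closure V ⊆ Ω →
    ∀ (x₀ : Euc n) (a b : ℝ),
      (∀ x ∈ frontier (V \ {x₀}), u x ≤ a * ‖x - x₀‖ + b) →
      ∀ x ∈ V, u x ≤ a * ‖x - x₀‖ + b

/-- Comparison with cones from below (infinity superharmonic). -/
def CmpBelow {n : ℕ} (Ω : Set (Euc n)) (u : Euc n → ℝ) : Prop :=
  ∀ V : Set (Euc n), IsOpen V → IsBounded V → closure V ⊆ Ω →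
    ∀ (x₀ : Euc n) (a b : ℝ),
      (∀ x ∈ frontier (V \ {x₀}), a * ‖x - x₀‖ + b ≤ u x) →
      ∀ x ∈ V, a * ‖x - x₀‖ + b ≤ u x

/-- Infinity harmonic = comparison with cones from both sides. -/
def InfHarmonic {n : ℕ} (Ω : Set (Euc n)) (u : Euc n → ℝ) : Prop :=
  CmpAbove Ω u ∧ CmpBelow Ω u

/-- m⁺ = max of u on ∂Ω. -/
def mP {n : ℕ} (Ω : Set (Euc n)) (u : Euc n → ℝ) : ℝ := sSup (u '' frontier Ω)

/-- m⁻ = min of u on ∂Ω. -/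
def mM {n : ℕ} (Ω : Set (Euc n)) (u : Euc n → ℝ) : ℝ := sInf (u '' frontier Ω)

/-- S⁺_r := (max(max_{∂B_r} u, m⁺) − m⁺)/r. -/
def SP {n : ℕ} (Ω : Set (Euc n)) (u : Euc n → ℝ) (r : ℝ) : ℝ :=
  (max (sSup (u '' sphere (0 : Euc n) r)) (mP Ω u) - mP Ω u) / r

/-- S⁻_r := (m⁻ − min(min_{∂B_r} u, m⁻))/r. -/
def SM {n : ℕ} (Ω : Set (Euc n)) (u : Euc n → ℝ) (r : ℝ) : ℝ :=
  (mM Ω u - min (sInf (u '' sphere (0 : Euc n) r)) (mM Ω u)) / r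

/-- Lip(u, S) := sup_{x≠y ∈ S} |u(x) − u(y)|/|x − y|. -/
def lipOn {n : ℕ} (u : Euc n → ℝ) (S : Set (Euc n)) : ℝ :=
  sSup ((fun p : Euc n × Euc n => |u p.1 - u p.2| / ‖p.1 - p.2‖) ''
    {p : Euc n × Euc n | p.1 ∈ S ∧ p.2 ∈ S ∧ p.1 ≠ p.2})

/-! Replacing `u` by `-u` swaps `S⁺` and `S⁻`, so we may assume `S⁻_∞ ≤ S⁺_∞` and show that
`Lip(u, B_r^c) → S⁺_∞`.

Comparing `u` with cones at the vertex `0 ∈ A` on `B_R` minus a thin collar of `A`, where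
`u < m⁺ + ε` by continuity, gives `u ≤ m⁺ + S⁺_∞ |z|` on `closure Ω`; dually `u ≥ m⁻ - S⁻_∞ |z|`.
Comparing with cones at a far vertex `y` on the annulus `B_R \ B̄_1` then gives
`u(x) - u(y) ≤ (S⁺_∞ + ε) |x - y|`: on `∂B_R` by the definition of `S⁺_R`, and on `∂B_1` because
the two global bounds and `S⁻_∞ ≤ S⁺_∞` leave a margin `ε |y|`. Conversely, a maximum point `x`
of `u` on a far sphere `∂B_R` and a fixed `y` with `|y| = r` have a difference quotient close to
`S⁺_∞`. -/

open scoped Pointwise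

variable {n : ℕ}

lemma frontier_diff_subset_union {X : Type*} [TopologicalSpace X] (s t : Set X) :
    frontier (s \ t) ⊆ frontier s ∪ frontier t := by
  rw [sdiff_eq]
  refine (frontier_inter_subset _ _).trans ?_
  rw [frontier_compl]
  exact union_subset_union inter_subset_left inter_subset_right

section Negation

variable {Ω : Set (Euc n)} {u : Euc n → ℝ}

lemma CmpAbove.neg (h : CmpAbove Ω u) : CmpBelow Ω (-u) := by
  intro V hV hVb hVΩ x₀ a b hbd x hx
  have := h V hV hVb hVΩ x₀ (-a) (-b) (fun z hz => by linarith [hbd z hz, Pi.neg_apply u z]) x hx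
  simp only [Pi.neg_apply]
  linarith

lemma CmpBelow.neg (h : CmpBelow Ω u) : CmpAbove Ω (-u) := by
  intro V hV hVb hVΩ x₀ a b hbd x hx
  have := h V hV hVb hVΩ x₀ (-a) (-b) (fun z hz => by linarith [hbd z hz, Pi.neg_apply u z]) x hx
  simp only [Pi.neg_apply]
  linarith

lemma InfHarmonic.neg (h : InfHarmonic Ω u) : InfHarmonic Ω (-u) :=
  ⟨h.2.neg, h.1.neg⟩

lemma image_neg_eq_neg_image (s : Set (Euc n)) : (-u) '' s = -(u '' s) := by
  rw [← Set.image_neg_eq_neg, Set.image_image]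
  rfl

lemma mP_neg : mP Ω (-u) = -mM Ω u := by
  rw [mP, mM, image_neg_eq_neg_image, Real.sSup_neg]

lemma mM_neg : mM Ω (-u) = -mP Ω u := by
  rw [mP, mM, image_neg_eq_neg_image, Real.sInf_neg]

lemma SP_neg (r : ℝ) : SP Ω (-u) r = SM Ω u r := by
  rw [SP, SM, mP_neg, image_neg_eq_neg_image, Real.sSup_neg, max_neg_neg]
  ring

lemma SM_neg (r : ℝ) : SM Ω (-u) r = SP Ω u r := by
  rw [SP, SM, mM_neg, image_neg_eq_neg_image, Real.sInf_neg, min_neg_neg]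
  ring

lemma lipOn_neg (S : Set (Euc n)) : lipOn (-u) S = lipOn u S := by
  simp only [lipOn, Pi.neg_apply, neg_sub_neg, abs_sub_comm]

end Negation

section LipOn

variable {u : Euc n → ℝ} {S : Set (Euc n)} {L : ℝ}

lemma lipOn_nonneg : 0 ≤ lipOn u S :=
  Real.sSup_nonneg (by rintro _ ⟨p, -, rfl⟩; positivity)

lemma div_le_of_abs_sub_le (h : ∀ x ∈ S, ∀ y ∈ S, |u x - u y| ≤ L * ‖x - y‖) :
    ∀ q ∈ (fun p : Euc n × Euc n => |u p.1 - u p.2| / ‖p.1 - p.2‖) ''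
      {p : Euc n × Euc n | p.1 ∈ S ∧ p.2 ∈ S ∧ p.1 ≠ p.2}, q ≤ L := by
  rintro _ ⟨p, ⟨hp₁, hp₂, hp⟩, rfl⟩
  exact (div_le_iff₀ (norm_pos_iff.2 (sub_ne_zero.2 hp))).2 (h _ hp₁ _ hp₂)

lemma lipOn_le (hL : 0 ≤ L) (h : ∀ x ∈ S, ∀ y ∈ S, |u x - u y| ≤ L * ‖x - y‖) :
    lipOn u S ≤ L :=
  Real.sSup_le (div_le_of_abs_sub_le h) hL

lemma div_le_lipOn (h : ∀ x ∈ S, ∀ y ∈ S, |u x - u y| ≤ L * ‖x - y‖) {x y : Euc n}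
    (hx : x ∈ S) (hy : y ∈ S) (hxy : x ≠ y) : |u x - u y| / ‖x - y‖ ≤ lipOn u S :=
  le_csSup ⟨L, div_le_of_abs_sub_le h⟩ ⟨(x, y), ⟨hx, hy, hxy⟩, rfl⟩

end LipOn

section Slopes

variable {Ω : Set (Euc n)} {u : Euc n → ℝ} {r Sp : ℝ}

lemma SP_nonneg (hr : 0 ≤ r) : 0 ≤ SP Ω u r :=
  div_nonneg (sub_nonneg.2 (le_max_right _ _)) hr

lemma nonneg_of_tendsto_SP (hSp : Tendsto (SP Ω u) atTop (𝓝 Sp)) : 0 ≤ Sp :=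
  ge_of_tendsto hSp ((eventually_ge_atTop 0).mono fun _ => SP_nonneg)

lemma mP_add_SP_mul (hr : r ≠ 0) :
    mP Ω u + SP Ω u r * r = max (sSup (u '' sphere (0 : Euc n) r)) (mP Ω u) := by
  rw [SP, div_mul_cancel₀ _ hr]
  ring

lemma tendsto_SP_zero [Subsingleton (Euc n)] : Tendsto (SP Ω u) atTop (𝓝 0) := by
  refine ((tendsto_const_nhds (x := max 0 (mP Ω u) - mP Ω u)).div_atTop tendsto_id).congr' ?_
  filter_upwards [eventually_gt_atTop 0] with r hr
  rw [SP, sphere_eq_empty_of_subsingleton hr.ne', image_empty, Real.sSup_empty, id]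

end Slopes

section Exterior

variable {A : Set (Euc n)} {u : Euc n → ℝ} {Sp Sm : ℝ}

lemma sphere_subset_compl (hA1 : A ⊆ ball 0 1) {R : ℝ} (hR : 1 ≤ R) :
    sphere (0 : Euc n) R ⊆ Aᶜ := fun z hz hzA => by
  have := mem_ball_zero_iff.1 (hA1 hzA)
  rw [mem_sphere_zero_iff_norm] at hz
  linarith

lemma le_mP_add_SP_mul (hA1 : A ⊆ ball 0 1) (hu : ContinuousOn u (closure Aᶜ)) {R : ℝ}
    (hR : 1 ≤ R) {z : Euc n} (hz : z ∈ sphere 0 R) : u z ≤ mP Aᶜ u + SP Aᶜ u R * R := by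
  have hbdd : BddAbove (u '' sphere 0 R) := (isCompact_sphere 0 R).bddAbove_image
    (hu.mono ((sphere_subset_compl hA1 hR).trans subset_closure))
  rw [mP_add_SP_mul (by positivity)]
  exact le_max_of_le_left (le_csSup hbdd (mem_image_of_mem u hz))

lemma exists_mP_add_SP_mul_le [Nontrivial (Euc n)] (hA1 : A ⊆ ball 0 1)
    (hu : ContinuousOn u (closure Aᶜ)) {R : ℝ} (hR : 1 ≤ R) (hpos : 0 < SP Aᶜ u R) :
    ∃ x ∈ sphere (0 : Euc n) R, mP Aᶜ u + SP Aᶜ u R * R ≤ u x := by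
  obtain ⟨x, hx, hmax⟩ := (isCompact_sphere (0 : Euc n) R).exists_isMaxOn
    (NormedSpace.sphere_nonempty.2 (by linarith))
    (hu.mono ((sphere_subset_compl hA1 hR).trans subset_closure))
  refine ⟨x, hx, ?_⟩
  have hsSup : sSup (u '' sphere 0 R) ≤ u x :=
    csSup_le (image_nonempty.2 ⟨x, hx⟩) (by rintro _ ⟨z, hz, rfl⟩; exact hmax hz)
  rw [mP_add_SP_mul (by positivity)]
  refine max_le hsSup ?_
  by_contra! h
  have : SP Aᶜ u R = 0 := by
    rw [SP, max_eq_right (hsSup.trans h.le), sub_self, zero_div]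
  linarith

lemma exists_cthickening_lt_mP_add (hA1 : A ⊆ ball 0 1) (hu : ContinuousOn u (closure Aᶜ))
    {ε : ℝ} (hε : 0 < ε) :
    ∃ δ > 0, ∀ w ∈ closure Aᶜ ∩ cthickening δ A, u w < mP Aᶜ u + ε := by
  have hA : IsBounded A := isBounded_ball.subset hA1
  set F := closure Aᶜ ∩ u ⁻¹' Ici (mP Aᶜ u + ε)
  have hF : IsClosed F := hu.preimage_isClosed_of_isClosed isClosed_closure isClosed_Ici
  have hbdd : BddAbove (u '' frontier Aᶜ) :=
    (hA.isCompact_closure.of_isClosed_subset isClosed_frontier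
      (frontier_compl A ▸ frontier_subset_closure)).bddAbove_image (hu.mono frontier_subset_closure)
  have hAF : closure A ⊆ Fᶜ := by
    rintro w hwA ⟨hwc, hwu⟩
    have hwfr : w ∈ frontier Aᶜ := ⟨hwc, by rw [interior_compl]; exact fun h => h hwA⟩
    have : u w ≤ mP Aᶜ u := le_csSup hbdd (mem_image_of_mem u hwfr)
    rw [mem_preimage, mem_Ici] at hwu
    linarith
  obtain ⟨δ, hδ, hsub⟩ := hA.isCompact_closure.exists_cthickening_subset_open hF.isOpen_compl hAF
  refine ⟨δ, hδ, fun w hw => ?_⟩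
  rw [cthickening_closure] at hsub
  by_contra! h
  exact hsub hw.2 ⟨hw.1, h⟩

lemma le_SP_mul_norm_add_of_notMem_cthickening (h0A : (0 : Euc n) ∈ A)
    (hA1 : A ⊆ ball 0 1) (hu : ContinuousOn u (closure Aᶜ)) (hCA : CmpAbove Aᶜ u)
    {δ ε R : ℝ} (hδ : 0 < δ) (hε : 0 ≤ ε)
    (hcol : ∀ w ∈ closure Aᶜ ∩ cthickening δ A, u w < mP Aᶜ u + ε)
    (hR : 1 ≤ R) {z : Euc n} (hzR : ‖z‖ < R) (hzδ : z ∉ cthickening δ A) :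
    u z ≤ SP Aᶜ u R * ‖z‖ + (mP Aᶜ u + ε) := by
  set C := cthickening δ A
  have hAC : A ⊆ interior C :=
    (self_subset_thickening hδ A).trans (thickening_subset_interior_cthickening δ A)
  have hCc : closure Cᶜ ⊆ closure Aᶜ :=
    closure_mono (compl_subset_compl.2 (self_subset_cthickening A))
  have hV : closure (ball 0 R \ C) ⊆ Aᶜ := fun w hw hwA => by
    have : w ∈ closure Cᶜ := closure_mono (fun _ h => h.2) hw
    rw [closure_compl] at this
    exact this (hAC hwA)
  have h0 : (0 : Euc n) ∉ ball 0 R \ C := fun h => h.2 (self_subset_cthickening A h0A)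
  have := hCA _ (isOpen_ball.sdiff isClosed_cthickening) (isBounded_ball.subset sdiff_subset) hV
    0 (SP Aᶜ u R) (mP Aᶜ u + ε) ?_ z ⟨mem_ball_zero_iff.2 hzR, hzδ⟩
  · rwa [sub_zero] at this
  rw [sdiff_singleton_eq_self h0]
  intro w hw
  rw [sub_zero]
  rcases frontier_diff_subset_union _ _ hw with hwR | hwC
  · rw [frontier_ball 0 (by positivity)] at hwR
    rw [mem_sphere_zero_iff_norm.1 hwR]
    linarith [le_mP_add_SP_mul hA1 hu hR hwR]
  · have hwΩ : w ∈ closure Aᶜ := hCc ((frontier_compl C ▸ frontier_subset_closure) hwC)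
    have := hcol w ⟨hwΩ, isClosed_cthickening.frontier_subset hwC⟩
    have hSPR := SP_nonneg (Ω := Aᶜ) (u := u) (by linarith : (0 : ℝ) ≤ R)
    nlinarith [mul_nonneg hSPR (norm_nonneg w)]

lemma le_mP_add_mul_norm (h0A : (0 : Euc n) ∈ A) (hA1 : A ⊆ ball 0 1)
    (hu : ContinuousOn u (closure Aᶜ)) (hCA : CmpAbove Aᶜ u)
    (hSp : Tendsto (SP Aᶜ u) atTop (𝓝 Sp)) {z : Euc n} (hz : z ∈ closure Aᶜ) :
    u z ≤ mP Aᶜ u + Sp * ‖z‖ := by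
  refine le_of_forall_pos_le_add fun ε hε => ?_
  obtain ⟨δ, hδ, hcol⟩ := exists_cthickening_lt_mP_add hA1 hu hε
  by_cases hzδ : z ∈ cthickening δ A
  · nlinarith [hcol z ⟨hz, hzδ⟩, mul_nonneg (nonneg_of_tendsto_SP hSp) (norm_nonneg z)]
  · have hlim := (hSp.mul_const ‖z‖).add_const (mP Aᶜ u + ε)
    have := ge_of_tendsto hlim <| (eventually_gt_atTop (max 1 ‖z‖)).mono fun R hR =>
      le_SP_mul_norm_add_of_notMem_cthickening h0A hA1 hu hCA hδ hε.le hcol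
        (le_max_left _ _ |>.trans hR.le) (le_max_right _ _ |>.trans_lt hR) hzδ
    linarith

lemma mM_sub_mul_norm_le (h0A : (0 : Euc n) ∈ A) (hA1 : A ⊆ ball 0 1)
    (hu : ContinuousOn u (closure Aᶜ)) (hCB : CmpBelow Aᶜ u)
    (hSm : Tendsto (SM Aᶜ u) atTop (𝓝 Sm)) {z : Euc n} (hz : z ∈ closure Aᶜ) :
    mM Aᶜ u - Sm * ‖z‖ ≤ u z := by
  have := le_mP_add_mul_norm h0A hA1 hu.neg hCB.neg (hSm.congr fun r => (SP_neg r).symm) hz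
  rw [mP_neg, Pi.neg_apply] at this
  linarith

end Exterior

section Annulus

variable {A : Set (Euc n)} {u : Euc n → ℝ} {Sp Sm : ℝ}

lemma frontier_annulus_sdiff_subset (R : ℝ) (hR : R ≠ 0) (y : Euc n) :
    frontier ((ball 0 R \ closedBall 0 1) \ {y}) ⊆ sphere 0 R ∪ sphere 0 1 ∪ {y} := by
  refine (frontier_diff_subset_union _ _).trans
    (union_subset_union ?_ isClosed_singleton.frontier_subset)
  refine (frontier_diff_subset_union _ _).trans (union_subset_union ?_ ?_)
  · rw [frontier_ball 0 hR]
  · rw [frontier_closedBall 0 one_ne_zero]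

lemma sub_le_mul_norm_sub (h0A : (0 : Euc n) ∈ A) (hA1 : A ⊆ ball 0 1)
    (hu : ContinuousOn u (closure Aᶜ)) (hIH : InfHarmonic Aᶜ u)
    (hSp : Tendsto (SP Aᶜ u) atTop (𝓝 Sp)) (hSm : Tendsto (SM Aᶜ u) atTop (𝓝 Sm))
    {ε : ℝ} (hε : 0 < ε) {x y : Euc n} (hx : 1 < ‖x‖) (hy₁ : 1 < ‖y‖)
    (hy : 2 * Sp + ε + mP Aᶜ u - mM Aᶜ u ≤ (Sp - Sm + ε) * ‖y‖) :
    u x - u y ≤ (Sp + ε) * ‖x - y‖ := by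
  have hSp0 := nonneg_of_tendsto_SP hSp
  have hΩ : ∀ {w : Euc n}, 1 ≤ ‖w‖ → w ∈ closure Aᶜ := fun hw =>
    subset_closure (sphere_subset_compl hA1 hw (mem_sphere_zero_iff_norm.2 rfl))
  have huy := mM_sub_mul_norm_le h0A hA1 hu hIH.2 hSm (hΩ hy₁.le)
  obtain ⟨R, hxR, hyR, hSPR, hRbig⟩ : ∃ R, ‖x‖ < R ∧ ‖y‖ < R ∧ SP Aᶜ u R ≤ Sp + ε / 2 ∧
      (Sp + ε + Sm) * ‖y‖ + mP Aᶜ u - mM Aᶜ u ≤ ε / 2 * R :=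
    ((eventually_gt_atTop _).and <| (eventually_gt_atTop _).and <|
      (hSp.eventually (eventually_le_nhds (by linarith))).and <|
      (tendsto_id.const_mul_atTop (half_pos hε)).eventually_ge_atTop _).exists
  have hR : 1 < R := hx.trans hxR
  have hV : closure (ball 0 R \ closedBall (0 : Euc n) 1) ⊆ Aᶜ := fun w hw hwA => by
    have : w ∈ closure (closedBall (0 : Euc n) 1)ᶜ := closure_mono (fun _ h => h.2) hw
    rw [closure_compl, interior_closedBall 0 one_ne_zero] at this
    exact this (hA1 hwA)
  refine sub_le_iff_le_add.2 <| hIH.1 _ (isOpen_ball.sdiff isClosed_closedBall)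
    (isBounded_ball.subset sdiff_subset) hV y (Sp + ε) (u y) ?_ x
    ⟨mem_ball_zero_iff.2 hxR, by simpa using hx⟩
  intro w hw
  rcases frontier_annulus_sdiff_subset R (by linarith : (0 : ℝ) < R).ne' y hw with (hwR | hw₁) | rfl
  · have hw := mem_sphere_zero_iff_norm.1 hwR
    have h₁ := le_mP_add_SP_mul hA1 hu hR.le hwR
    have h₂ := mul_le_mul_of_nonneg_right hSPR (by linarith : (0 : ℝ) ≤ R)
    have h₃ : (Sp + ε) * (R - ‖y‖) ≤ (Sp + ε) * ‖w - y‖ :=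
      mul_le_mul_of_nonneg_left (hw ▸ norm_sub_norm_le w y) (by positivity)
    linarith
  · have hw := mem_sphere_zero_iff_norm.1 hw₁
    have h₁ := le_mP_add_mul_norm h0A hA1 hu hIH.1 hSp (hΩ hw.ge)
    have h₃ : (Sp + ε) * (‖y‖ - 1) ≤ (Sp + ε) * ‖w - y‖ :=
      mul_le_mul_of_nonneg_left (hw ▸ norm_sub_rev y w ▸ norm_sub_norm_le y w) (by positivity)
    rw [hw] at h₁
    linarith
  · simp

lemma eventually_abs_sub_le_mul_norm_sub (h0A : (0 : Euc n) ∈ A) (hA1 : A ⊆ ball 0 1)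
    (hu : ContinuousOn u (closure Aᶜ)) (hIH : InfHarmonic Aᶜ u)
    (hSp : Tendsto (SP Aᶜ u) atTop (𝓝 Sp)) (hSm : Tendsto (SM Aᶜ u) atTop (𝓝 Sm))
    (hle : Sm ≤ Sp) {ε : ℝ} (hε : 0 < ε) :
    ∀ᶠ r in atTop, ∀ x ∈ (ball (0 : Euc n) r)ᶜ, ∀ y ∈ (ball (0 : Euc n) r)ᶜ,
      |u x - u y| ≤ (Sp + ε) * ‖x - y‖ := by
  filter_upwards [eventually_gt_atTop 1,
    (tendsto_id.const_mul_atTop hε).eventually_ge_atTop (2 * Sp + ε + mP Aᶜ u - mM Aᶜ u)]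
    with r hr₁ hr x hx y hy
  rw [id] at hr
  rw [mem_compl_iff, mem_ball_zero_iff, not_lt] at hx hy
  have key : ∀ x y : Euc n, r ≤ ‖x‖ → r ≤ ‖y‖ → u x - u y ≤ (Sp + ε) * ‖x - y‖ :=
    fun x y hx hy => sub_le_mul_norm_sub h0A hA1 hu hIH hSp hSm hε (by linarith) (by linarith)
      (by nlinarith [mul_nonneg (sub_nonneg.2 hle) (norm_nonneg y),
        mul_le_mul_of_nonneg_left hy hε.le])
  exact abs_sub_le_iff.2 ⟨key x y hx hy, norm_sub_rev x y ▸ key y x hy hx⟩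

end Annulus

section Limit

variable {A : Set (Euc n)} {u : Euc n → ℝ} {Sp Sm : ℝ}

lemma le_lipOn_compl_ball (hA1 : A ⊆ ball 0 1) (hu : ContinuousOn u (closure Aᶜ))
    (hSp : Tendsto (SP Aᶜ u) atTop (𝓝 Sp)) {r L : ℝ} (hr : 1 ≤ r)
    (hL : ∀ x ∈ (ball (0 : Euc n) r)ᶜ, ∀ y ∈ (ball (0 : Euc n) r)ᶜ,
      |u x - u y| ≤ L * ‖x - y‖) :
    Sp ≤ lipOn u (ball (0 : Euc n) r)ᶜ := by
  rcases subsingleton_or_nontrivial (Euc n) with _ | _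
  · rw [tendsto_nhds_unique hSp tendsto_SP_zero]
    exact lipOn_nonneg
  refine le_of_forall_sub_le fun ε hε => ?_
  rcases le_or_gt Sp ε with hSpε | hSpε
  · linarith [lipOn_nonneg (u := u) (S := (ball (0 : Euc n) r)ᶜ)]
  obtain ⟨y, hy⟩ := (NormedSpace.sphere_nonempty (E := Euc n) (x := 0)).2 (by linarith : 0 ≤ r)
  rw [mem_sphere_zero_iff_norm] at hy
  obtain ⟨R, hrR, hSPR, hRbig⟩ : ∃ R, r < R ∧ Sp - ε / 2 ≤ SP Aᶜ u R ∧
      (Sp - ε) * r + u y - mP Aᶜ u ≤ ε / 2 * R :=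
    ((eventually_gt_atTop _).and <| (hSp.eventually (eventually_ge_nhds (by linarith))).and <|
      (tendsto_id.const_mul_atTop (half_pos hε)).eventually_ge_atTop _).exists
  obtain ⟨x, hx, hux⟩ := exists_mP_add_SP_mul_le hA1 hu (R := R) (by linarith) (by linarith)
  rw [mem_sphere_zero_iff_norm] at hx
  have hxy : x ≠ y := fun h => by rw [h] at hx; linarith
  have hmem : ∀ {w : Euc n}, r ≤ ‖w‖ → w ∈ (ball (0 : Euc n) r)ᶜ := fun hw => by
    rwa [mem_compl_iff, mem_ball_zero_iff, not_lt]
  refine le_trans ?_ (div_le_lipOn hL (hmem (by linarith)) (hmem hy.ge) hxy)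
  rw [le_div_iff₀ (norm_pos_iff.2 (sub_ne_zero.2 hxy))]
  have h₁ : (Sp - ε) * ‖x - y‖ ≤ (Sp - ε) * (R + r) :=
    mul_le_mul_of_nonneg_left (hx ▸ hy ▸ norm_sub_le x y) (by linarith)
  have h₂ := mul_le_mul_of_nonneg_right hSPR (by linarith : (0 : ℝ) ≤ R)
  linarith [le_abs_self (u x - u y)]

lemma tendsto_lipOn_compl_ball_of_le (h0A : (0 : Euc n) ∈ A) (hA1 : A ⊆ ball 0 1)
    (hu : ContinuousOn u (closure Aᶜ)) (hIH : InfHarmonic Aᶜ u)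
    (hSp : Tendsto (SP Aᶜ u) atTop (𝓝 Sp)) (hSm : Tendsto (SM Aᶜ u) atTop (𝓝 Sm))
    (hle : Sm ≤ Sp) :
    Tendsto (fun r => lipOn u (ball (0 : Euc n) r)ᶜ) atTop (𝓝 Sp) := by
  have hSp0 := nonneg_of_tendsto_SP hSp
  refine tendsto_order.2 ⟨fun a ha => ?_, fun a ha => ?_⟩
  · filter_upwards [eventually_ge_atTop 1,
      eventually_abs_sub_le_mul_norm_sub h0A hA1 hu hIH hSp hSm hle one_pos] with r hr hL
    exact ha.trans_le (le_lipOn_compl_ball hA1 hu hSp hr hL)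
  · filter_upwards [eventually_abs_sub_le_mul_norm_sub h0A hA1 hu hIH hSp hSm hle
      (half_pos (sub_pos.2 ha))] with r hL
    exact (lipOn_le (by linarith) hL).trans_lt (by linarith)

end Limit

theorem stmt2_general {n : ℕ} (A : Set (Euc n))
    (h0A : (0 : Euc n) ∈ A) (hA1 : A ⊆ ball 0 1)
    (u : Euc n → ℝ) (hu : ContinuousOn u (closure Aᶜ)) (hIH : InfHarmonic Aᶜ u)
    (Sp Sm : ℝ) (hSp : Tendsto (SP Aᶜ u) atTop (𝓝 Sp))
    (hSm : Tendsto (SM Aᶜ u) atTop (𝓝 Sm)) :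
    Tendsto (fun r => lipOn u (ball (0 : Euc n) r)ᶜ) atTop (𝓝 (max Sp Sm)) := by
  rcases le_total Sm Sp with hle | hle
  · rw [max_eq_left hle]
    exact tendsto_lipOn_compl_ball_of_le h0A hA1 hu hIH hSp hSm hle
  · rw [max_eq_right hle]
    simpa only [lipOn_neg] using tendsto_lipOn_compl_ball_of_le h0A hA1 hu.neg hIH.neg
      (hSm.congr fun r => (SP_neg r).symm) (hSp.congr fun r => (SM_neg r).symm) hle

/-- Proposition 1: lim_{r→∞} Lip(u, B_r^c) = S_∞. -/
theorem stmt2 {n : ℕ} (A : Set (Euc n)) (hAcl : IsClosed A) (hAbd : IsBounded A)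
    (h0A : (0 : Euc n) ∈ A) (hA1 : A ⊆ ball 0 1)
    (u : Euc n → ℝ) (hu : ContinuousOn u (closure Aᶜ)) (hIH : InfHarmonic Aᶜ u)
    (hgrow : IsBoundedUnder (· ≤ ·) (cobounded (Euc n)) fun x => |u x| / ‖x‖)
    (Sp Sm : ℝ) (hSp : Tendsto (SP Aᶜ u) atTop (𝓝 Sp))
    (hSm : Tendsto (SM Aᶜ u) atTop (𝓝 Sm)) :
    Tendsto (fun r => lipOn u (ball (0 : Euc n) r)ᶜ) atTop (𝓝 (max Sp Sm)) :=
  stmt2_general A h0A hA1 u hu hIH Sp Sm hSp hSm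
end
end

section
/- (Theorem 2(ii)) Let A ⊆ ℝⁿ be a bounded closed set with 0 ∈ A ⊆ B₁, Ω := ℝⁿ \ A, and let g : ∂Ω → ℝ be continuous. For any a ∈ ℝⁿ with |a| > 0, there exists a function u, continuous on the closure of Ω and infinity harmonic in Ω, such that u = g on ∂Ω and the function x ↦ u(x) − a·x attains both its maximum and its minimum over the closure of Ω on ∂Ω; that is, with c⁺ := max_{∂Ω}(g(x) − a·x) and c⁻ := min_{∂Ω}(g(x) − a·x), one has c⁻ + a·x ≤ u(x) ≤ c⁺ + a·x in Ω. -/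
/-!
Perron's method. The upper barriers are the plane `c⁺ + a·x` and the cones `c + L‖x - y‖` with
apex `y ∈ ∂Ω` lying above `g` on `∂Ω`; their infimum `hi` is a supersolution equal to `g` on `∂Ω`,
and minus the same construction for `(-g, -a)` is a subsolution `lo ≤ hi`. The supremum `u` of all
subsolutions between `lo` and `hi` is a subsolution, and if a cone lay below `u` on the boundary of
some `V ⋐ Ω` but above it inside, raising `u` to that cone would produce a larger member of the
family, so `u` is infinity harmonic. Subsolutions are locally Lipschitz where bounded, and at `∂Ω`
the two envelopes pinch to `g`, so `u` is continuous up to the boundary.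

Comparison of planes, cones and sums of two cones with cones reduces to a maximum principle on
bounded sets, proved on a single line through the point: along a ray from the apex of a cone the
function is convex.
-/

open Metric Set Filter Bornology Topology
open scoped RealInnerProductSpace

noncomputable section

theorem IsPreconnected.inter_frontier_nonempty {X : Type*} [TopologicalSpace X] {s t : Set X}
    (hs : IsPreconnected s) (hst : (s ∩ t).Nonempty) (hs_t : (s \ t).Nonempty) :
    (s ∩ frontier t).Nonempty := by
  by_contra hfr
  rw [not_nonempty_iff_eq_empty, ← disjoint_iff_inter_eq_empty] at hfr
  have interior_of_mem : ∀ x ∈ s, x ∈ closure t → x ∈ interior t := fun x hx hxt =>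
    by_contra fun hint => hfr.notMem_of_mem_left hx ⟨hxt, hint⟩
  obtain ⟨x, hxs, hxt⟩ := hst
  have hsub : s ⊆ interior t := hs.subset_of_closure_inter_subset isOpen_interior
    ⟨x, hxs, interior_of_mem x hxs (subset_closure hxt)⟩
    fun y ⟨hy, hys⟩ => interior_of_mem y hys (closure_mono interior_subset hy)
  obtain ⟨y, hys, hyt⟩ := hs_t
  exact hyt (interior_subset (hsub hys))

section NormedSpace

variable {E : Type*} [NormedAddCommGroup E] [NormedSpace ℝ E]

theorem self_mem_frontier_sdiff_singleton [Nontrivial E] {V : Set E} (hV : IsOpen V) {x : E}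
    (hx : x ∈ V) : x ∈ frontier (V \ {x}) := by
  rw [(hV.sdiff isClosed_singleton).frontier_eq]
  refine ⟨mem_closure_iff_frequently.2 ?_, fun h => h.2 rfl⟩
  have hne : ∃ᶠ y in 𝓝 x, y ∈ ({x}ᶜ : Set E) :=
    mem_closure_iff_frequently.1 ((dense_compl_singleton x).closure_eq ▸ mem_univ x)
  exact (hne.and_eventually (hV.mem_nhds hx)).mono fun y ⟨hy, hyV⟩ => ⟨hyV, hy⟩

/-- The segment from `z` to `x` and the ray beyond `x` both leave `S` through its frontier, at
points on either side of `x`. -/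
theorem le_zero_of_convexOn_lineMap {S : Set E} (hS : IsBounded S) {z x : E} (hz : z ∉ S)
    (hx : x ∈ S) {h : E → ℝ} (hconv : ConvexOn ℝ (Ici 0) (h ∘ AffineMap.lineMap (k := ℝ) z x))
    (hfr : ∀ q ∈ frontier S, h q ≤ 0) : h x ≤ 0 := by
  set ℓ : ℝ → E := ⇑(AffineMap.lineMap (k := ℝ) z x)
  have hℓ : Continuous ℓ := AffineMap.lineMap_continuous
  have h1 : (1 : ℝ) ∈ ℓ ⁻¹' S := by simpa [ℓ] using hx
  have h0 : (0 : ℝ) ∉ ℓ ⁻¹' S := by simpa [ℓ] using hz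
  have hxz : 0 < dist z x := dist_pos.2 (ne_of_mem_of_not_mem hx hz).symm
  obtain ⟨R, hR⟩ := hS.subset_closedBall z
  have hR0 : 0 ≤ R := dist_nonneg.trans (hR hx)
  have hfar : R / dist z x + 1 ∉ ℓ ⁻¹' S := fun hmem => by
    have := hR hmem
    rw [mem_closedBall, dist_lineMap_left, Real.norm_of_nonneg (by positivity), add_mul,
      div_mul_cancel₀ _ hxz.ne'] at this
    linarith
  obtain ⟨s₁, ⟨hs₁0, hs₁1⟩, hs₁⟩ := isPreconnected_Icc.inter_frontier_nonempty
    ⟨1, ⟨zero_le_one, le_rfl⟩, h1⟩ ⟨0, ⟨le_rfl, zero_le_one⟩, h0⟩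
  obtain ⟨s₂, hs₂1, hs₂⟩ := (isPreconnected_Ici (a := (1 : ℝ))).inter_frontier_nonempty
    ⟨1, mem_Ici.2 le_rfl, h1⟩
    ⟨R / dist z x + 1, mem_Ici.2 (le_add_of_nonneg_left (by positivity)), hfar⟩
  have hmax := hconv.le_on_segment (mem_Ici.2 hs₁0) (mem_Ici.2 (zero_le_one.trans hs₂1))
    (by rw [segment_eq_Icc (hs₁1.trans hs₂1)]; exact ⟨hs₁1, hs₂1⟩)
  simp only [Function.comp_apply, ℓ, AffineMap.lineMap_apply_one] at hmax
  exact hmax.trans (max_le (hfr _ (hℓ.frontier_preimage_subset S hs₁))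
    (hfr _ (hℓ.frontier_preimage_subset S hs₂)))

theorem cone_add_convex_le_zero {S : Set E} (hS : IsBounded S) {z : E} (hz : z ∉ S) (β : ℝ)
    {φ : E → ℝ} (hφ : ConvexOn ℝ univ φ) (hfr : ∀ q ∈ frontier S, β * ‖q - z‖ + φ q ≤ 0)
    {x : E} (hx : x ∈ S) : β * ‖x - z‖ + φ x ≤ 0 := by
  refine le_zero_of_convexOn_lineMap hS hz hx (h := fun q => β * ‖q - z‖ + φ q) ?_ hfr
  have hcone : ConvexOn ℝ (Ici 0) fun s : ℝ => β * ‖x - z‖ * s :=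
    (LinearMap.mul ℝ ℝ (β * ‖x - z‖)).convexOn (convex_Ici 0)
  have hφ_ray : ConvexOn ℝ (Ici 0) (φ ∘ AffineMap.lineMap (k := ℝ) z x) :=
    (hφ.comp_affineMap (AffineMap.lineMap z x)).subset (subset_univ _) (convex_Ici 0)
  refine (hcone.add hφ_ray).congr ?_
  intro s hs
  simp only [Pi.add_apply, Function.comp_apply, ← dist_eq_norm, dist_lineMap_left,
    Real.norm_of_nonneg (mem_Ici.1 hs), dist_comm z x]
  ring

theorem cone_add_cone_le_zero_of_le {S : Set E} (hS : IsBounded S) {z y : E} (hz : z ∉ S)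
    {β δ γ : ℝ} (hβδ : β ≤ δ) (hfr : ∀ q ∈ frontier S, β * ‖q - z‖ + δ * ‖q - y‖ + γ ≤ 0)
    {x : E} (hx : x ∈ S) : β * ‖x - z‖ + δ * ‖x - y‖ + γ ≤ 0 := by
  rcases le_or_gt 0 δ with hδ | hδ
  · have hφ : ConvexOn ℝ univ fun q => δ * ‖q - y‖ + γ :=
      (((convexOn_dist y convex_univ).smul hδ).add_const γ).congr fun q _ => by
        simp [dist_eq_norm]
    simpa only [add_assoc] using
      cone_add_convex_le_zero hS hz β hφ (fun q hq => by simpa only [add_assoc] using hfr q hq) hx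
  · -- walking from `x` straight to `z` only helps: the `β`-cone drops at least as fast as the
    -- `δ`-cone can rise
    obtain ⟨q, hq_seg, hq⟩ := (convex_segment x z).isPreconnected.inter_frontier_nonempty
      ⟨x, left_mem_segment ℝ x z, hx⟩ ⟨z, right_mem_segment ℝ x z, hz⟩
    have hsplit : ‖x - q‖ + ‖q - z‖ = ‖x - z‖ := by
      simpa only [dist_eq_norm] using dist_add_dist_of_mem_segment hq_seg
    have htri : ‖q - y‖ ≤ ‖x - q‖ + ‖x - y‖ := by
      simpa only [norm_sub_rev q x] using norm_sub_le_norm_sub_add_norm_sub q x y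
    have hβq : β * ‖q - z‖ = β * ‖x - z‖ - β * ‖x - q‖ := by rw [← hsplit]; ring
    nlinarith [hfr q hq, mul_le_mul_of_nonpos_left htri hδ.le,
      mul_nonneg (sub_nonneg.2 hβδ) (norm_nonneg (x - q))]

theorem cone_add_cone_le_zero {S : Set E} (hS : IsBounded S) {z y : E} (hz : z ∉ S)
    (hy : y ∉ S) {β δ γ : ℝ} (hfr : ∀ q ∈ frontier S, β * ‖q - z‖ + δ * ‖q - y‖ + γ ≤ 0)
    {x : E} (hx : x ∈ S) : β * ‖x - z‖ + δ * ‖x - y‖ + γ ≤ 0 := by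
  rcases le_total β δ with hβδ | hδβ
  · exact cone_add_cone_le_zero_of_le hS hz hβδ hfr hx
  · have hfr' : ∀ q ∈ frontier S, δ * ‖q - y‖ + β * ‖q - z‖ + γ ≤ 0 := fun q hq => by
      linarith [hfr q hq]
    linarith [cone_add_cone_le_zero_of_le hS hy hδβ hfr' hx]

end NormedSpace

section Comparison

variable {n : ℕ} {Ω : Set (Euc n)}

theorem cmpBelow_iff_cmpAbove_neg {u : Euc n → ℝ} :
    CmpBelow Ω u ↔ CmpAbove Ω fun x => -u x := by
  constructor <;> intro hu V hVo hVb hVΩ x₀ a b hfr x hx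
  · linarith [hu V hVo hVb hVΩ x₀ (-a) (-b) (fun q hq => by linarith [hfr q hq]) x hx]
  · linarith [hu V hVo hVb hVΩ x₀ (-a) (-b) (fun q hq => by linarith [hfr q hq]) x hx]

theorem cmpAbove_csSup {F : Set (Euc n → ℝ)} (hne : F.Nonempty)
    (hbdd : ∀ x, BddAbove ((fun v => v x) '' F)) (hF : ∀ v ∈ F, CmpAbove Ω v) :
    CmpAbove Ω fun x => sSup ((fun v => v x) '' F) := by
  intro V hVo hVb hVΩ x₀ a b hfr x hx
  refine csSup_le (hne.image _) ?_
  rintro _ ⟨v, hv, rfl⟩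
  exact hF v hv V hVo hVb hVΩ x₀ a b
    (fun q hq => (le_csSup (hbdd q) ⟨v, hv, rfl⟩).trans (hfr q hq)) x hx

theorem cmpBelow_csInf {F : Set (Euc n → ℝ)} (hne : F.Nonempty)
    (hbdd : ∀ x, BddBelow ((fun v => v x) '' F)) (hF : ∀ v ∈ F, CmpBelow Ω v) :
    CmpBelow Ω fun x => sInf ((fun v => v x) '' F) := by
  intro V hVo hVb hVΩ x₀ a b hfr x hx
  refine le_csInf (hne.image _) ?_
  rintro _ ⟨v, hv, rfl⟩
  exact hF v hv V hVo hVb hVΩ x₀ a b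
    (fun q hq => (hfr q hq).trans (csInf_le (hbdd q) ⟨v, hv, rfl⟩)) x hx

variable [Nontrivial (Euc n)]

theorem cmpAbove_cone {y : Euc n} (hy : y ∉ Ω) (c L : ℝ) :
    CmpAbove Ω fun x => c + L * ‖x - y‖ := by
  intro V hVo hVb hVΩ x₀ a b hfr x hx
  rcases eq_or_ne x x₀ with rfl | hne
  · exact hfr x (self_mem_frontier_sdiff_singleton hVo hx)
  have hyV : y ∉ V \ {x₀} := fun h => hy (hVΩ (subset_closure h.1))
  linarith [cone_add_cone_le_zero (hVb.subset sdiff_subset) hyV (fun h => h.2 rfl)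
    (β := L) (δ := -a) (γ := c - b) (fun q hq => by linarith [hfr q hq]) ⟨hx, hne⟩]

theorem cmpAbove_affine (p : Euc n) (c : ℝ) : CmpAbove Ω fun x => c + ⟪p, x⟫ := by
  intro V hVo hVb hVΩ x₀ a b hfr x hx
  rcases eq_or_ne x x₀ with rfl | hne
  · exact hfr x (self_mem_frontier_sdiff_singleton hVo hx)
  have hφ : ConvexOn ℝ univ fun q => ⟪p, q⟫ + (c - b) :=
    (((innerₛₗ ℝ p).convexOn convex_univ).add_const (c - b)).congr fun q _ => by simp
  linarith [cone_add_convex_le_zero (S := V \ {x₀}) (hVb.subset sdiff_subset) (fun h => h.2 rfl)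
    (-a) hφ (fun q hq => by linarith [hfr q hq]) ⟨hx, hne⟩]

theorem cmpBelow_cone {y : Euc n} (hy : y ∉ Ω) (c L : ℝ) :
    CmpBelow Ω fun x => c + L * ‖x - y‖ :=
  cmpBelow_iff_cmpAbove_neg.2 <| by convert cmpAbove_cone hy (-c) (-L) using 2; ring

theorem cmpBelow_affine (p : Euc n) (c : ℝ) : CmpBelow Ω fun x => c + ⟪p, x⟫ :=
  cmpBelow_iff_cmpAbove_neg.2 <| by
    convert cmpAbove_affine (Ω := Ω) (-p) (-c) using 2; rw [inner_neg_left]; ring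

end Comparison

section Perron

variable {n : ℕ} [Nontrivial (Euc n)] {Ω : Set (Euc n)} {u : Euc n → ℝ}

theorem CmpAbove.piecewise_max_cone (hu : CmpAbove Ω u) {D : Set (Euc n)} [DecidablePred (· ∈ D)]
    (hD : IsOpen D) {z : Euc n} (hz : z ∉ D) {a₀ b₀ : ℝ}
    (hC : ∀ p ∈ frontier D, a₀ * ‖p - z‖ + b₀ ≤ u p) :
    CmpAbove Ω (D.piecewise (fun x => max (u x) (a₀ * ‖x - z‖ + b₀)) u) := by
  set w := D.piecewise (fun x => max (u x) (a₀ * ‖x - z‖ + b₀)) u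
  have hw_in : ∀ x ∈ D, w x = max (u x) (a₀ * ‖x - z‖ + b₀) := fun x hx =>
    piecewise_eq_of_mem _ _ _ hx
  have hw_out : ∀ x ∉ D, w x = u x := fun x hx => piecewise_eq_of_notMem _ _ _ hx
  have hu_w : ∀ x, u x ≤ w x := fun x => by
    by_cases hx : x ∈ D
    · exact (hw_in x hx).symm ▸ le_max_left _ _
    · exact (hw_out x hx).ge
  intro V hVo hVb hVΩ x₀ a b hfr x hx
  have hV₀ : IsOpen (V \ {x₀}) := hVo.sdiff isClosed_singleton
  have hu_cl : ∀ p ∈ closure (V \ {x₀}), u p ≤ a * ‖p - x₀‖ + b := by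
    rw [closure_eq_self_union_frontier]
    rintro p (hp | hp)
    · exact hu V hVo hVb hVΩ x₀ a b (fun q hq => (hu_w q).trans (hfr q hq)) p hp.1
    · exact (hu_w p).trans (hfr p hp)
  have hcone : ∀ p ∈ (V \ {x₀}) ∩ D, a₀ * ‖p - z‖ + b₀ ≤ a * ‖p - x₀‖ + b := by
    intro p hp
    suffices hfrS : ∀ q ∈ frontier ((V \ {x₀}) ∩ D), a₀ * ‖q - z‖ + -a * ‖q - x₀‖ + (b₀ - b) ≤ 0 by
      have hS : IsBounded ((V \ {x₀}) ∩ D) := hVb.subset (inter_subset_left.trans sdiff_subset)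
      have hzS : z ∉ (V \ {x₀}) ∩ D := fun h => hz h.2
      have hx₀S : x₀ ∉ (V \ {x₀}) ∩ D := fun h => h.1.2 rfl
      linarith [cone_add_cone_le_zero hS hzS hx₀S hfrS hp]
    intro q hq
    rw [(hV₀.inter hD).frontier_eq] at hq
    obtain ⟨hq_cl, hq_not⟩ := hq
    by_cases hqD : q ∈ D
    · have hq_fr : q ∈ frontier (V \ {x₀}) := by
        rw [hV₀.frontier_eq]
        exact ⟨closure_mono inter_subset_left hq_cl, fun h => hq_not ⟨h, hqD⟩⟩
      linarith [hfr q hq_fr, hw_in q hqD ▸ le_max_right (u q) (a₀ * ‖q - z‖ + b₀)]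
    · have hq_fr : q ∈ frontier D := by
        rw [hD.frontier_eq]
        exact ⟨closure_mono inter_subset_right hq_cl, hqD⟩
      linarith [hC q hq_fr, hu_cl q (closure_mono inter_subset_left hq_cl)]
  rcases eq_or_ne x x₀ with rfl | hne
  · exact hfr x (self_mem_frontier_sdiff_singleton hVo hx)
  by_cases hxD : x ∈ D
  · exact hw_in x hxD ▸ max_le (hu_cl x (subset_closure ⟨hx, hne⟩)) (hcone x ⟨⟨hx, hne⟩, hxD⟩)
  · exact (hw_out x hxD).trans_le (hu_cl x (subset_closure ⟨hx, hne⟩))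

/-- Perron's method: `u` is the supremum of all subsolutions between `lo` and `hi`. -/
theorem exists_infHarmonic_between {lo hi : Euc n → ℝ} (hle : ∀ x, lo x ≤ hi x)
    (hlo : CmpAbove Ω lo) (hhi : CmpBelow Ω hi) :
    ∃ u, InfHarmonic Ω u ∧ ∀ x, lo x ≤ u x ∧ u x ≤ hi x := by
  classical
  set F := {v | CmpAbove Ω v ∧ ∀ x, lo x ≤ v x ∧ v x ≤ hi x}
  have hlo_F : lo ∈ F := ⟨hlo, fun x => ⟨le_rfl, hle x⟩⟩
  have hbdd : ∀ x, BddAbove ((fun v => v x) '' F) := fun x => ⟨hi x, by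
    rintro _ ⟨v, hv, rfl⟩
    exact (hv.2 x).2⟩
  set u := fun x => sSup ((fun v => v x) '' F)
  have hle_u : ∀ v ∈ F, ∀ x, v x ≤ u x := fun v hv x => le_csSup (hbdd x) ⟨v, hv, rfl⟩
  have hu_hi : ∀ x, u x ≤ hi x := fun x => csSup_le ⟨lo x, lo, hlo_F, rfl⟩ <| by
    rintro _ ⟨v, hv, rfl⟩
    exact (hv.2 x).2
  have hu_above : CmpAbove Ω u := cmpAbove_csSup ⟨lo, hlo_F⟩ hbdd fun v hv => hv.1
  refine ⟨u, ⟨hu_above, ?_⟩, fun x => ⟨hle_u lo hlo_F x, hu_hi x⟩⟩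
  -- a cone below `u` on `∂(V \ {z})` but above it at `x` can be pasted into `u`, which gives a
  -- member of the family larger than `u` at `x`
  intro V hVo hVb hVΩ z a b hfr x hx
  by_contra! hlt
  have hxz : x ≠ z := by
    rintro rfl
    linarith [hfr x (self_mem_frontier_sdiff_singleton hVo hx)]
  have hC_hi : ∀ y ∈ V, a * ‖y - z‖ + b ≤ hi y :=
    hhi V hVo hVb hVΩ z a b fun q hq => (hfr q hq).trans (hu_hi q)
  set w := (V \ {z}).piecewise (fun y => max (u y) (a * ‖y - z‖ + b)) u
  have hw_in : ∀ y ∈ V \ {z}, w y = max (u y) (a * ‖y - z‖ + b) := fun y hy =>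
    piecewise_eq_of_mem _ _ _ hy
  have hw_out : ∀ y ∉ V \ {z}, w y = u y := fun y hy => piecewise_eq_of_notMem _ _ _ hy
  have hw_F : w ∈ F := by
    refine ⟨hu_above.piecewise_max_cone (hVo.sdiff isClosed_singleton) (fun h => h.2 rfl) hfr,
      fun y => ⟨(hle_u lo hlo_F y).trans ?_, ?_⟩⟩ <;> by_cases hy : y ∈ V \ {z}
    · exact (hw_in y hy).symm ▸ le_max_left _ _
    · exact (hw_out y hy).ge
    · exact (hw_in y hy).symm ▸ max_le (hu_hi y) (hC_hi y hy.1)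
    · exact (hw_out y hy).trans_le (hu_hi y)
  linarith [hle_u w hw_F x, hw_in x ⟨hx, hxz⟩, le_max_right (u x) (a * ‖x - z‖ + b)]

end Perron

section Regularity

variable {n : ℕ} {Ω : Set (Euc n)} {u : Euc n → ℝ}

theorem CmpAbove.le_add_mul_norm (hu : CmpAbove Ω u) {x : Euc n} {r M : ℝ} (hr : 0 < r)
    (hball : closedBall x r ⊆ Ω) (hM : ∀ p ∈ sphere x r, u p ≤ M) {y : Euc n}
    (hy : y ∈ ball x r) : u y ≤ u x + (M - u x) / r * ‖y - x‖ := by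
  rw [add_comm]
  refine hu (ball x r) isOpen_ball isBounded_ball (by rwa [closure_ball x hr.ne']) x _ _ ?_ y hy
  intro p hp
  rw [(isOpen_ball.sdiff isClosed_singleton).frontier_eq] at hp
  have hp_cl : dist p x ≤ r := by
    simpa [closure_ball x hr.ne'] using closure_mono sdiff_subset hp.1
  rcases eq_or_ne p x with rfl | hpx
  · simp
  · have hpr : ‖p - x‖ = r := by
      rw [← dist_eq_norm]
      exact le_antisymm hp_cl (not_lt.1 fun h => hp.2 ⟨mem_ball.2 h, hpx⟩)
    rw [hpr, div_mul_cancel₀ _ hr.ne']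
    linarith [hM p (mem_sphere.2 (hpr ▸ dist_eq_norm p x))]

theorem CmpAbove.continuousAt (hu : CmpAbove Ω u) {x₀ : Euc n} (hΩ : Ω ∈ 𝓝 x₀) {m M : ℝ}
    (hm : ∀ᶠ x in 𝓝 x₀, m ≤ u x) (hM : ∀ᶠ x in 𝓝 x₀, u x ≤ M) : ContinuousAt u x₀ := by
  obtain ⟨ρ, hρ, hball⟩ :=
    Metric.mem_nhds_iff.1 ((show ∀ᶠ x in 𝓝 x₀, x ∈ Ω from hΩ).and (hm.and hM))
  have hlip : ∀ x ∈ ball x₀ (ρ / 4), ∀ y ∈ ball x₀ (ρ / 4),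
      u y ≤ u x + (M - m) / (ρ / 2) * dist y x := by
    intro x hx y hy
    have hx' := mem_ball.1 hx
    have hsub : closedBall x (ρ / 2) ⊆ ball x₀ ρ := closedBall_subset_ball' (by linarith)
    have hyx : y ∈ ball x (ρ / 2) := by
      rw [mem_ball]
      linarith [dist_triangle_right y x x₀, mem_ball.1 hy]
    have hux : m ≤ u x := (hball (ball_subset_ball (by linarith) hx)).2.1
    have hMx := hu.le_add_mul_norm (half_pos hρ) (hsub.trans fun p hp => (hball hp).1)
      (fun p hp => (hball (hsub (sphere_subset_closedBall hp))).2.2) hyx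
    rw [dist_eq_norm]
    refine hMx.trans (add_le_add_right (mul_le_mul_of_nonneg_right ?_ (norm_nonneg _)) _)
    exact div_le_div_of_nonneg_right (by linarith) (by linarith)
  exact ((LipschitzOnWith.of_le_add_mul' _ fun y hy x hx => hlip x hx y hy).continuousOn
    |>.continuousAt (ball_mem_nhds x₀ (by positivity)))

end Regularity

theorem exists_forall_le_add_mul_dist {X : Type*} [PseudoMetricSpace X] {Γ : Set X} {g : X → ℝ}
    {q : X} (hbdd : BddAbove (g '' Γ)) (hg : ContinuousWithinAt g Γ q) {c : ℝ} (hc : g q < c)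
    (L₀ : ℝ) : ∃ L ≥ L₀, ∀ x ∈ Γ, g x ≤ c + L * dist x q := by
  obtain ⟨M, hM⟩ := hbdd
  obtain ⟨δ, hδ, hnear⟩ := Metric.mem_nhdsWithin_iff.1 (hg (Iio_mem_nhds hc))
  set L := max (max L₀ 0) ((M - c) / δ)
  have hL : 0 ≤ L := le_max_of_le_left (le_max_right _ _)
  refine ⟨L, le_max_of_le_left (le_max_left _ _), fun x hx => ?_⟩
  by_cases hxq : dist x q < δ
  · linarith [show g x < c from hnear ⟨hxq, hx⟩, mul_nonneg hL (dist_nonneg (x := x) (y := q))]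
  · have hfar : M - c ≤ L * dist x q :=
      ((div_le_iff₀ hδ).1 (le_max_right _ _)).trans (mul_le_mul_of_nonneg_left (not_lt.1 hxq) hL)
    linarith [hM ⟨x, hx, rfl⟩]

section Barriers

variable {F : Type*} [NormedAddCommGroup F] [InnerProductSpace ℝ F]

/-- The slope bound `L ≥ ‖a‖` keeps every cone above the lower plane `c⁻ + a·x`, and the slack
`c > g y` is what makes such cones exist for a merely continuous `g`. -/
def upperBarriers (Γ : Set F) (g : F → ℝ) (a : F) : Set (F → ℝ) :=
  insert (fun x => sSup ((fun y => g y - ⟪a, y⟫) '' Γ) + ⟪a, x⟫)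
    {f | ∃ y ∈ Γ, ∃ c > g y, ∃ L ≥ ‖a‖, (∀ x ∈ Γ, g x ≤ c + L * ‖x - y‖) ∧
      f = fun x => c + L * ‖x - y‖}

def upperEnvelope (Γ : Set F) (g : F → ℝ) (a : F) (x : F) : ℝ :=
  sInf ((fun f => f x) '' upperBarriers Γ g a)

variable {Γ : Set F} {g : F → ℝ}

theorem bddAbove_image_sub_inner (hΓ : IsCompact Γ) (hg : ContinuousOn g Γ) (a : F) :
    BddAbove ((fun y => g y - ⟪a, y⟫) '' Γ) :=
  hΓ.bddAbove_image (hg.sub (continuous_const.inner continuous_id).continuousOn)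

theorem add_inner_le_sSup_add_inner {a : F} (hbdd : BddAbove ((fun y => g y - ⟪a, y⟫) '' Γ))
    {y : F} (hy : y ∈ Γ) (x : F) :
    g y + ⟪a, x - y⟫ ≤ sSup ((fun y => g y - ⟪a, y⟫) '' Γ) + ⟪a, x⟫ := by
  linarith [le_csSup hbdd ⟨y, hy, rfl⟩, inner_sub_right (𝕜 := ℝ) a x y]

theorem add_inner_le_cone {a y : F} {c L : ℝ} (hc : g y ≤ c) (hL : ‖a‖ ≤ L) (x : F) :
    g y + ⟪a, x - y⟫ ≤ c + L * ‖x - y‖ := by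
  linarith [real_inner_le_norm a (x - y), mul_le_mul_of_nonneg_right hL (norm_nonneg (x - y))]

theorem neg_le_of_mem_upperBarriers (hΓ : IsCompact Γ) (hΓne : Γ.Nonempty)
    (hg : ContinuousOn g Γ) {a : F} {f f' : F → ℝ} (hf : f ∈ upperBarriers Γ g a)
    (hf' : f' ∈ upperBarriers Γ (-g) (-a)) (x : F) : -f' x ≤ f x := by
  have hbdd := bddAbove_image_sub_inner hΓ hg a
  have hbdd' := bddAbove_image_sub_inner hΓ hg.neg (-a)
  have hsum : ∀ y, g y + ⟪a, x - y⟫ + ((-g) y + ⟪-a, x - y⟫) = 0 := fun y => by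
    simp only [Pi.neg_apply, inner_neg_left]; ring
  obtain rfl | ⟨y, hy, c, hc, L, hL, hgc, rfl⟩ := hf <;>
    obtain rfl | ⟨y', hy', c', hc', L', hL', hgc', rfl⟩ := hf'
  · obtain ⟨y, hy⟩ := hΓne
    linarith [hsum y, add_inner_le_sSup_add_inner hbdd hy x,
      add_inner_le_sSup_add_inner hbdd' hy x]
  · linarith [hsum y', add_inner_le_sSup_add_inner hbdd hy' x, add_inner_le_cone hc'.le hL' x]
  · linarith [hsum y, add_inner_le_cone hc.le hL x, add_inner_le_sSup_add_inner hbdd' hy x]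
  · -- the cone with the smaller slope is controlled at the apex of the other one
    have hL0 : 0 ≤ L := (norm_nonneg a).trans hL
    have hL0' : 0 ≤ L' := (norm_nonneg (-a)).trans hL'
    have htri := norm_sub_le_norm_sub_add_norm_sub y' x y
    rw [norm_sub_rev y' x] at htri
    simp only [Pi.neg_apply] at hc' hgc'
    rcases le_total L L' with hLL' | hL'L
    · nlinarith [hgc y' hy', mul_le_mul_of_nonneg_left htri hL0,
        mul_le_mul_of_nonneg_right hLL' (norm_nonneg (x - y'))]
    · nlinarith [hgc' y hy, mul_le_mul_of_nonneg_left htri hL0',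
        mul_le_mul_of_nonneg_right hL'L (norm_nonneg (x - y)), norm_sub_rev y y']

theorem upperEnvelope_le (hΓ : IsCompact Γ) (hΓne : Γ.Nonempty) (hg : ContinuousOn g Γ) {a : F}
    {f : F → ℝ} (hf : f ∈ upperBarriers Γ g a) (x : F) : upperEnvelope Γ g a x ≤ f x :=
  csInf_le ⟨_, by
    rintro _ ⟨f, hf, rfl⟩
    exact neg_le_of_mem_upperBarriers hΓ hΓne hg hf (mem_insert _ _) x⟩ ⟨f, hf, rfl⟩

theorem upperEnvelope_le_sSup_add_inner (hΓ : IsCompact Γ) (hΓne : Γ.Nonempty)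
    (hg : ContinuousOn g Γ) (a x : F) :
    upperEnvelope Γ g a x ≤ sSup ((fun y => g y - ⟪a, y⟫) '' Γ) + ⟪a, x⟫ :=
  upperEnvelope_le hΓ hΓne hg (mem_insert _ _) x

theorem neg_upperEnvelope_neg_le (hΓ : IsCompact Γ) (hΓne : Γ.Nonempty) (hg : ContinuousOn g Γ)
    (a x : F) : -upperEnvelope Γ (-g) (-a) x ≤ upperEnvelope Γ g a x := by
  refine le_csInf ⟨_, _, mem_insert _ _, rfl⟩ ?_
  rintro _ ⟨f, hf, rfl⟩
  rw [neg_le]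
  refine le_csInf ⟨_, _, mem_insert _ _, rfl⟩ ?_
  rintro _ ⟨f', hf', rfl⟩
  exact neg_le_of_mem_upperBarriers hΓ hΓne hg.neg hf' (by rwa [neg_neg, neg_neg]) x

theorem exists_cone_mem_upperBarriers (hΓ : IsCompact Γ) (hg : ContinuousOn g Γ) (a : F) {q : F}
    (hq : q ∈ Γ) {ε : ℝ} (hε : 0 < ε) :
    ∃ L, (fun x => g q + ε + L * ‖x - q‖) ∈ upperBarriers Γ g a := by
  obtain ⟨L, hL, hgL⟩ := exists_forall_le_add_mul_dist (hΓ.bddAbove_image hg) (hg q hq)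
    (lt_add_of_pos_right (g q) hε) ‖a‖
  exact ⟨L, Or.inr ⟨q, hq, _, lt_add_of_pos_right _ hε, L, hL,
    by simpa only [dist_eq_norm] using hgL, rfl⟩⟩

theorem upperEnvelope_eq (hΓ : IsCompact Γ) (hΓne : Γ.Nonempty) (hg : ContinuousOn g Γ)
    (a : F) {q : F} (hq : q ∈ Γ) : upperEnvelope Γ g a q = g q := by
  refine le_antisymm (le_of_forall_pos_le_add fun ε hε => ?_)
    (le_csInf ⟨_, _, mem_insert _ _, rfl⟩ ?_)
  · obtain ⟨L, hL⟩ := exists_cone_mem_upperBarriers hΓ hg a hq hε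
    simpa using upperEnvelope_le hΓ hΓne hg hL q
  · rintro _ ⟨f, rfl | ⟨y, hy, c, hc, L, hL, hgc, rfl⟩, rfl⟩
    · linarith [le_csSup (bddAbove_image_sub_inner hΓ hg a) ⟨q, hq, rfl⟩]
    · exact hgc q hq

theorem eventually_upperEnvelope_lt (hΓ : IsCompact Γ) (hΓne : Γ.Nonempty)
    (hg : ContinuousOn g Γ) (a : F) {q : F} (hq : q ∈ Γ) {c : ℝ} (hc : g q < c) :
    ∀ᶠ x in 𝓝 q, upperEnvelope Γ g a x < c := by
  obtain ⟨L, hL⟩ := exists_cone_mem_upperBarriers hΓ hg a hq (half_pos (sub_pos.2 hc))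
  have hcont : ContinuousAt (fun x => g q + (c - g q) / 2 + L * ‖x - q‖) q := by fun_prop
  have hq_lt : g q + (c - g q) / 2 + L * ‖q - q‖ < c := by
    rw [sub_self, norm_zero]
    linarith
  filter_upwards [hcont.eventually (gt_mem_nhds hq_lt)] with x hx
  exact (upperEnvelope_le hΓ hΓne hg hL x).trans_lt hx

theorem eventually_upperEnvelope_le (hΓ : IsCompact Γ) (hΓne : Γ.Nonempty)
    (hg : ContinuousOn g Γ) (a x₀ : F) : ∃ M, ∀ᶠ x in 𝓝 x₀, upperEnvelope Γ g a x ≤ M := by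
  have hcont : ContinuousAt (fun x => sSup ((fun y => g y - ⟪a, y⟫) '' Γ) + ⟪a, x⟫) x₀ := by
    fun_prop
  exact ⟨_, (hcont.eventually (gt_mem_nhds (lt_add_one _))).mono fun x hx =>
    (upperEnvelope_le_sSup_add_inner hΓ hΓne hg a x).trans hx.le⟩

theorem sInf_add_inner_le_neg_upperEnvelope (hΓ : IsCompact Γ) (hΓne : Γ.Nonempty)
    (hg : ContinuousOn g Γ) (a x : F) :
    sInf ((fun y => g y - ⟪a, y⟫) '' Γ) + ⟪a, x⟫ ≤ -upperEnvelope Γ (-g) (-a) x := by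
  have hsInf : sInf ((fun y => g y - ⟪a, y⟫) '' Γ) =
      -sSup ((fun y => (-g) y - ⟪-a, y⟫) '' Γ) := by
    rw [Real.sInf_def, ← image_neg_eq_neg, image_image]
    congr! 3 with y
    simp only [Pi.neg_apply, inner_neg_left]
    ring
  linarith [upperEnvelope_le_sSup_add_inner hΓ hΓne hg.neg (-a) x, inner_neg_left (𝕜 := ℝ) a x]

theorem eq_of_squeeze_upperEnvelope (hΓ : IsCompact Γ) (hΓne : Γ.Nonempty)
    (hg : ContinuousOn g Γ) {a : F} {u : F → ℝ}
    (hlo : ∀ x, -upperEnvelope Γ (-g) (-a) x ≤ u x) (hhi : ∀ x, u x ≤ upperEnvelope Γ g a x)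
    {q : F} (hq : q ∈ Γ) : u q = g q := by
  have hlo_q := hlo q
  rw [upperEnvelope_eq hΓ hΓne hg.neg (-a) hq, Pi.neg_apply, neg_neg] at hlo_q
  exact le_antisymm ((hhi q).trans (upperEnvelope_eq hΓ hΓne hg a hq).le) hlo_q

theorem continuousAt_of_squeeze_upperEnvelope (hΓ : IsCompact Γ) (hΓne : Γ.Nonempty)
    (hg : ContinuousOn g Γ) {a : F} {u : F → ℝ}
    (hlo : ∀ x, -upperEnvelope Γ (-g) (-a) x ≤ u x) (hhi : ∀ x, u x ≤ upperEnvelope Γ g a x)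
    {q : F} (hq : q ∈ Γ) : ContinuousAt u q := by
  rw [ContinuousAt, eq_of_squeeze_upperEnvelope hΓ hΓne hg hlo hhi hq]
  refine tendsto_order.2 ⟨fun c hc => ?_, fun c hc => ?_⟩
  · filter_upwards [eventually_upperEnvelope_lt hΓ hΓne hg.neg (-a) hq (c := -c)
      (by simpa using hc)] with x hx
    linarith [hlo x]
  · filter_upwards [eventually_upperEnvelope_lt hΓ hΓne hg a hq hc] with x hx
    exact (hhi x).trans_lt hx

end Barriers

theorem cmpBelow_upperEnvelope {n : ℕ} [Nontrivial (Euc n)] {Ω Γ : Set (Euc n)} {g : Euc n → ℝ}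
    (hΓ : IsCompact Γ) (hΓne : Γ.Nonempty) (hg : ContinuousOn g Γ) (hΓΩ : Disjoint Γ Ω)
    (a : Euc n) : CmpBelow Ω (upperEnvelope Γ g a) := by
  refine cmpBelow_csInf ⟨_, mem_insert _ _⟩
    (fun x => ⟨-(sSup ((fun y => (-g) y - ⟪-a, y⟫) '' Γ) + ⟪-a, x⟫), ?_⟩) ?_
  · rintro _ ⟨f, hf, rfl⟩
    exact neg_le_of_mem_upperBarriers hΓ hΓne hg hf (mem_insert _ _) x
  · rintro _ (rfl | ⟨y, hy, c, hc, L, hL, hgc, rfl⟩)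
    · exact cmpBelow_affine a _
    · exact cmpBelow_cone (hΓΩ.notMem_of_mem_left hy) c L

theorem stmt14_general {n : ℕ} (A : Set (Euc n)) (hAcl : IsClosed A) (hAbd : IsBounded A)
    (h0A : (0 : Euc n) ∈ A)
    (g : Euc n → ℝ) (hg : ContinuousOn g (frontier Aᶜ))
    (a : Euc n) (ha : 0 < ‖a‖) :
    ∃ u : Euc n → ℝ, ContinuousOn u (closure Aᶜ) ∧ InfHarmonic Aᶜ u ∧
      (∀ x ∈ frontier Aᶜ, u x = g x) ∧
      ∀ x ∈ Aᶜ,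
        sInf ((fun y => g y - ⟪a, y⟫) '' frontier Aᶜ) + ⟪a, x⟫ ≤ u x ∧
        u x ≤ sSup ((fun y => g y - ⟪a, y⟫) '' frontier Aᶜ) + ⟪a, x⟫ := by
  have : Nontrivial (Euc n) := nontrivial_of_ne a 0 (norm_pos_iff.1 ha)
  have hΩ : IsOpen Aᶜ := hAcl.isOpen_compl
  have hΓ : IsCompact (frontier Aᶜ) := frontier_compl A ▸
    (hAbd.isCompact_closure.of_isClosed_subset isClosed_frontier frontier_subset_closure)
  have hΓne : (frontier Aᶜ).Nonempty := frontier_compl A ▸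
    nonempty_frontier_iff.2 ⟨⟨0, h0A⟩, fun h => NormedSpace.unbounded_univ ℝ (Euc n) (h ▸ hAbd)⟩
  have hΓΩ : Disjoint (frontier Aᶜ) Aᶜ := disjoint_iff_inter_eq_empty.2 <| by
    rw [inter_comm, hΩ.inter_frontier_eq]
  obtain ⟨u, hu, hbounds⟩ := exists_infHarmonic_between (neg_upperEnvelope_neg_le hΓ hΓne hg a)
    (cmpBelow_iff_cmpAbove_neg.1 (cmpBelow_upperEnvelope hΓ hΓne hg.neg hΓΩ (-a)))
    (cmpBelow_upperEnvelope hΓ hΓne hg hΓΩ a)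
  have hlo x := (hbounds x).1
  have hhi x := (hbounds x).2
  refine ⟨u, fun x hx => ?_, hu, fun q hq => eq_of_squeeze_upperEnvelope hΓ hΓne hg hlo hhi hq,
    fun x _ => ⟨(sInf_add_inner_le_neg_upperEnvelope hΓ hΓne hg a x).trans (hlo x),
      (hhi x).trans (upperEnvelope_le_sSup_add_inner hΓ hΓne hg a x)⟩⟩
  by_cases hxΩ : x ∈ Aᶜ
  · obtain ⟨M, hM⟩ := eventually_upperEnvelope_le hΓ hΓne hg a x
    obtain ⟨M', hM'⟩ := eventually_upperEnvelope_le hΓ hΓne hg.neg (-a) x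
    exact (hu.1.continuousAt (hΩ.mem_nhds hxΩ) (hM'.mono fun y hy => (neg_le_neg hy).trans (hlo y))
      (hM.mono fun y hy => (hhi y).trans hy)).continuousWithinAt
  · exact (continuousAt_of_squeeze_upperEnvelope hΓ hΓne hg hlo hhi
      (hΩ.frontier_eq ▸ ⟨hx, hxΩ⟩)).continuousWithinAt

/-- Theorem 2(ii): for any boundary data g and any a ≠ 0 there is an exterior
infinity harmonic function with u = g on ∂Ω and c⁻ + a·x ≤ u ≤ c⁺ + a·x in Ω. -/
theorem stmt14 {n : ℕ} (A : Set (Euc n)) (hAcl : IsClosed A) (hAbd : IsBounded A)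
    (h0A : (0 : Euc n) ∈ A) (hA1 : A ⊆ ball 0 1)
    (g : Euc n → ℝ) (hg : ContinuousOn g (frontier Aᶜ))
    (a : Euc n) (ha : 0 < ‖a‖) :
    ∃ u : Euc n → ℝ, ContinuousOn u (closure Aᶜ) ∧ InfHarmonic Aᶜ u ∧
      (∀ x ∈ frontier Aᶜ, u x = g x) ∧
      ∀ x ∈ Aᶜ,
        sInf ((fun y => g y - ⟪a, y⟫) '' frontier Aᶜ) + ⟪a, x⟫ ≤ u x ∧
        u x ≤ sSup ((fun y => g y - ⟪a, y⟫) '' frontier Aᶜ) + ⟪a, x⟫ :=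
  stmt14_general A hAcl hAbd h0A g hg a ha
end
end
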